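/- arXiv:1504.03474 — 3 statements merged into one kernel-verified Lean document; each statement's English description precedes it below -/
import Mathlib

section
/- Let 𝒮 be an FTS, R ⊆ S × 𝔹(ℱ) × S a branching feature bisimulation relation for 𝒮, and P ∈ 𝒫 a product. Then the relation R_P = {(s',t') | there exists a feature expression φ with R(s',φ,t') and P ⊨ φ} is a branching bisimulation relation for the projection 𝒮_P. In particular, if R(s, true, t) then R_P(s,t). -/
open Classical

/-- Actions with a silent action τ, modeled as `none`. -/
abbrev Act (A : Type) := Option A

/-- Feature expressions, taken modulo product-equivalence: a feature expression
is identified with the set of products satisfying it (`Set.univ` is `true`,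
`∅` is `false`, `∩` is `∧`, `∪` is `∨`, and `P ⊨ φ` is `P ∈ φ`). -/
abbrev FExp (P : Type) := Set P

/-- Transition constraint function of a feature transition system (FTS). -/
abbrev TCF (S A P : Type) := S → Act A → S → FExp P

/-- `s →α|ψ s'`: the transition constraint is `ψ` and `ψ` is satisfiable. -/
def FTrans {S A P : Type} (θ : TCF S A P) (s : S) (α : Act A) (ψ : FExp P) (s' : S) : Prop :=
  θ s α s' = ψ ∧ ψ.Nonempty

/-- `t̂ →(α|ψ) t'`: either `t̂ →α|ψ t'`, or `α = τ`, `t̂ = t'` and `ψ = true`. -/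
def FTransOpt {S A P : Type} (θ : TCF S A P) (s : S) (α : Act A) (ψ : FExp P) (s' : S) : Prop :=
  FTrans θ s α ψ s' ∨ (α = none ∧ s = s' ∧ ψ = Set.univ)

/-- `s ⇒η s'`: a finite (possibly empty) sequence of τ-transitions whose
constraints have conjunction `η`. -/
inductive TauSeq {S A P : Type} (θ : TCF S A P) : S → FExp P → S → Prop
  | refl (s : S) : TauSeq θ s Set.univ s
  | step {s s' s'' : S} {ψ η : FExp P} :
      FTrans θ s none ψ s' → TauSeq θ s' η s'' → TauSeq θ s (ψ ∩ η) s''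

/-- Branching feature bisimulation relation for the transition constraint
function `θ`. -/
def IsBFB {S A P : Type} (θ : TCF S A P) (R : S → FExp P → S → Prop) : Prop :=
  (∀ s φ t, R s φ t → R t φ s) ∧
  ∀ s φ t α ψ s', R s φ t → FTrans θ s α ψ s' →
    ∃ n : ℕ, 0 < n ∧ ∃ th tf : Fin n → S, ∃ η ps ph ph' : Fin n → FExp P,
      (∀ i, TauSeq θ t (η i) (th i) ∧ FTransOpt θ (th i) α (ps i) (tf i) ∧
            R s (ph i) (th i) ∧ R s' (ph' i) (tf i)) ∧
      ∀ p, p ∈ φ → p ∈ ψ → ∃ i, p ∈ η i ∧ p ∈ ps i ∧ p ∈ ph i ∧ p ∈ ph' i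

/-- `p ∈ ρ(s)`: there is a path from `s₀` to `s` all of whose transition
constraints are satisfied by the product `p`. -/
inductive ReachP {S A P : Type} (θ : TCF S A P) (p : P) (s₀ : S) : S → Prop
  | refl : ReachP θ p s₀ s₀
  | step {s s' : S} {α : Act A} {ψ : FExp P} :
      ReachP θ p s₀ s → FTrans θ s α ψ s' → p ∈ ψ → ReachP θ p s₀ s'

/-- The reachability function ρ of an FTS with initial state `s₀`. -/
def Reach {S A P : Type} (θ : TCF S A P) (s₀ s : S) : FExp P := {p | ReachP θ p s₀ s}

/-- Transition constraint function of the disjoint union of two FTS. -/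
def sumθ {S S' A P : Type} (θ : TCF S A P) (θ' : TCF S' A P) : TCF (S ⊕ S') A P :=
  fun x α y =>
    match x, y with
    | Sum.inl s, Sum.inl t => θ s α t
    | Sum.inr s, Sum.inr t => θ' s α t
    | _, _ => ∅

/-- Coherence of a relation on the disjoint union of two FTS:
`R(s,φ,s')` implies that every product satisfying `ρ(s)` satisfies `φ`. -/
def Coherent {S S' A P : Type} (θ : TCF S A P) (s₀ : S) (θ' : TCF S' A P) (s₀' : S')
    (R : (S ⊕ S') → FExp P → (S ⊕ S') → Prop) : Prop :=
  (∀ s φ y, R (Sum.inl s) φ y → Reach θ s₀ s ⊆ φ) ∧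
  (∀ s' φ y, R (Sum.inr s') φ y → Reach θ' s₀' s' ⊆ φ)

/-- `𝒮 ≃_cbf 𝒮'`: coherent branching feature bisimilarity of two FTS. -/
def CBF {S S' A P : Type} (θ : TCF S A P) (s₀ : S) (θ' : TCF S' A P) (s₀' : S') : Prop :=
  ∃ R : (S ⊕ S') → FExp P → (S ⊕ S') → Prop,
    IsBFB (sumθ θ θ') R ∧ Coherent θ s₀ θ' s₀' R ∧
    R (Sum.inl s₀) Set.univ (Sum.inr s₀')

/-- Projection of an FTS to a product `p`: the transition relation of the LTS `𝒮_p`. -/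
def projTr {S A P : Type} (θ : TCF S A P) (p : P) : S → Option A → S → Prop :=
  fun s α s' => ∃ ψ, FTrans θ s α ψ s' ∧ p ∈ ψ

/-- For an LTS: `s ⇒ s'`, a finite (possibly empty) sequence of τ-transitions. -/
def TauStar {S A : Type} (Tr : S → Option A → S → Prop) : S → S → Prop :=
  Relation.ReflTransGen (fun s t => Tr s none t)

/-- For an LTS: `t̂ →(α) t'`. -/
def TransOpt {S A : Type} (Tr : S → Option A → S → Prop) (s : S) (α : Option A) (t : S) : Prop :=
  Tr s α t ∨ (α = none ∧ s = t)

/-- Branching bisimulation relation for an LTS. -/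
def IsBB {S A : Type} (Tr : S → Option A → S → Prop) (R : S → S → Prop) : Prop :=
  (∀ s t, R s t → R t s) ∧
  ∀ s t α s', R s t → Tr s α s' →
    ∃ th t', TauStar Tr t th ∧ TransOpt Tr th α t' ∧ R s th ∧ R s' t'

lemma tauSeq_to_tauStar {S A P : Type} {θ : TCF S A P} {p : P} {s s' : S} {η : FExp P}
    (h : TauSeq θ s η s') (hp : p ∈ η) : TauStar (projTr θ p) s s' := by
  induction h with
  | refl s => exact Relation.ReflTransGen.refl
  | step ht _ ih =>
    exact Relation.ReflTransGen.head ⟨_, ht, hp.1⟩ (ih hp.2)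

/-- If `R` is a branching feature bisimulation relation for an FTS
`𝒮` and `P` is a product, then `R_P = {(s',t') | ∃φ, R(s',φ,t') ∧ P ⊨ φ}` is a
branching bisimulation relation for the projection `𝒮_P`; in particular
`R(s,true,t)` implies `R_P(s,t)`. -/
theorem stmt3 {S A P : Type} [Finite A] [Finite P] (θ : TCF S A P)
    (R : S → FExp P → S → Prop) (hR : IsBFB θ R) (p : P) :
    IsBB (projTr θ p) (fun s' t' => ∃ φ : FExp P, R s' φ t' ∧ p ∈ φ) ∧
    ∀ s t : S, R s Set.univ t → ∃ φ : FExp P, R s φ t ∧ p ∈ φ := by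
  constructor
  · constructor
    · rintro s t ⟨φ, hφ, hp⟩
      exact ⟨φ, hR.1 _ _ _ hφ, hp⟩
    · rintro s t α s' ⟨φ, hφ, hpφ⟩ ⟨ψ, hψ, hpψ⟩
      obtain ⟨n, hn, th, tf, η, ps, ph, ph', hi, hcov⟩ := hR.2 s φ t α ψ s' hφ hψ
      obtain ⟨i, hη, hps, hph, hph'⟩ := hcov p hpφ hpψ
      obtain ⟨hts, hop, hRi, hRi'⟩ := hi i
      refine ⟨th i, tf i, tauSeq_to_tauStar hts hη, ?_, ⟨ph i, hRi, hph⟩, ⟨ph' i, hRi', hph'⟩⟩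
      rcases hop with h | ⟨h1, h2, h3⟩
      · exact Or.inl ⟨ps i, h, hps⟩
      · exact Or.inr ⟨h1, h2⟩
  · intro s t h
    exact ⟨Set.univ, h, Set.mem_univ p⟩
end

section
/- Let 𝒢 = (V,E) be a finite undirected graph with V nonempty, 𝒮_G the associated FTS, 𝒮' an FTS, and R a coherent branching feature bisimulation relation witnessing 𝒮_G ≃_cbf 𝒮'. If (u,v) ∈ E, then there is no state r of 𝒮' and feature expressions φ, φ' with both R(s_u, φ, r) and R(s_v, φ', r). Consequently, choosing for each v ∈ V a state r_v of 𝒮' with R(s_v, φ_v, r_v) for some φ_v yields a proper coloring of 𝒢 by states of 𝒮'. -/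
open Classical

/-- States of the FTS `𝒮_G` associated with a graph with vertex type `V`. -/
inductive GS (V : Type) where
  | s1 : GS V
  | s2 : GS V
  | sv : V → GS V

/-- Transition constraint function of `𝒮_G`. The single action `a` is `some ()`;
the products are the vertices (`v` stands for `P_v = {f_v}`), so the feature
expression `f_v` is the set `{v}` and `θ_G(s₁,a,s_v) = f_v ∨ ⋁{f_u | (u,v) ∈ E}`
is `insert v {u | G.Adj u v}`. -/
def graphθ {V : Type} (G : SimpleGraph V) : TCF (GS V) Unit V :=
  fun x α y =>
    match x, α, y with
    | GS.s1, some _, GS.sv v => insert v {u | G.Adj u v}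
    | GS.sv v, some _, GS.s2 => {v}
    | _, _, _ => ∅

/-!
Fix the product `u` of an edge `u — v`. Coherence forces `R(s_u, φ, r)` and `R(s_v, φ', r)` to
hold with `u ∈ φ` and `u ∈ φ'`, since both `s_u` and `s_v` are reachable under `u`. Projecting
onto `u` turns `R` into a branching bisimulation of plain LTSs, in which `s_u` can do `a` while
`s_v` is a deadlock (its only transition needs `f_v`). A state related to a deadlock can neither
do a visible action nor reach by τ-steps a state that can, so `r` cannot be related to both.
-/

section Projection

variable {S A P : Type} {θ : TCF S A P} {R : S → FExp P → S → Prop}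

lemma TauSeq.tauStar_projTr {p : P} {t t' : S} {η : FExp P}
    (h : TauSeq θ t η t') (hp : p ∈ η) : TauStar (projTr θ p) t t' := by
  induction h with
  | refl s => exact Relation.ReflTransGen.refl
  | step hft _ ih => exact Relation.ReflTransGen.head ⟨_, hft, hp.1⟩ (ih hp.2)

lemma IsBFB.isBB_projTr (h : IsBFB θ R) (p : P) :
    IsBB (projTr θ p) (fun s t => ∃ φ, R s φ t ∧ p ∈ φ) := by
  refine ⟨fun s t ⟨φ, hR, hp⟩ => ⟨φ, h.1 _ _ _ hR, hp⟩, ?_⟩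
  rintro s t α s' ⟨φ, hR, hp⟩ ⟨ψ, hft, hpψ⟩
  obtain ⟨n, -, th, tf, η, ps, ph, ph', hfam, hcov⟩ := h.2 s φ t α ψ s' hR hft
  obtain ⟨i, hη, hps, hph, hph'⟩ := hcov p hp hpψ
  obtain ⟨hts, hfo, hR₁, hR₂⟩ := hfam i
  refine ⟨th i, tf i, hts.tauStar_projTr hη, ?_, ⟨_, hR₁, hph⟩, ⟨_, hR₂, hph'⟩⟩
  rcases hfo with hft' | ⟨hα, heq, -⟩
  · exact Or.inl ⟨_, hft', hps⟩
  · exact Or.inr ⟨hα, heq⟩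

end Projection

section Deadlock

variable {S A : Type} {Tr : S → Option A → S → Prop} {R : S → S → Prop} {s : S}

lemma tauStar_eq_of_deadlock (hs : ∀ α y, ¬ Tr s α y) {x : S} (h : TauStar Tr s x) : x = s := by
  rcases Relation.ReflTransGen.cases_head h with rfl | ⟨y, hy, -⟩
  · rfl
  · exact absurd hy (hs none y)

lemma IsBB.eq_none_of_rel_deadlock (hR : IsBB Tr R) (hs : ∀ α y, ¬ Tr s α y) {t t' : S}
    {α : Option A} (hts : R t s) (ht : Tr t α t') : α = none := by
  obtain ⟨th, _, hth, hto, -, -⟩ := hR.2 _ _ _ _ hts ht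
  rw [tauStar_eq_of_deadlock hs hth] at hto
  rcases hto with h | ⟨hα, -⟩
  · exact absurd h (hs _ _)
  · exact hα

lemma IsBB.rel_deadlock_of_tauStar (hR : IsBB Tr R) (hs : ∀ α y, ¬ Tr s α y) {t x : S}
    (hts : R t s) (h : TauStar Tr t x) : R x s := by
  induction h with
  | refl => exact hts
  | tail _ hstep ih =>
    obtain ⟨th, t', hth, hto, -, hR'⟩ := hR.2 _ _ _ _ ih hstep
    rw [tauStar_eq_of_deadlock hs hth] at hto
    rcases hto with h | ⟨-, rfl⟩
    · exact absurd h (hs _ _)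
    · exact hR'

lemma IsBB.not_rel_deadlock_of_trans (hR : IsBB Tr R) (hs : ∀ α y, ¬ Tr s α y)
    {t t' r : S} {a : A} (ht : Tr t (some a) t') (htr : R t r) (hsr : R s r) : False := by
  obtain ⟨th, t'', hth, hto, -, -⟩ := hR.2 _ _ _ _ htr ht
  have hths : R th s := hR.rel_deadlock_of_tauStar hs (hR.1 _ _ hsr) hth
  rcases hto with h | ⟨hα, -⟩
  · exact Option.some_ne_none a (hR.eq_none_of_rel_deadlock hs hths h)
  · exact Option.some_ne_none a hα

end Deadlock

section GraphFTS

variable {V : Type} {G : SimpleGraph V} {S' : Type} {θ' : TCF S' Unit V}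

lemma mem_reach_graphθ_sv {u v : V} (h : u = v ∨ G.Adj u v) :
    u ∈ Reach (graphθ G) GS.s1 (GS.sv v) :=
  ReachP.step (α := some ()) (ψ := insert v {x | G.Adj x v}) ReachP.refl
    ⟨rfl, v, Set.mem_insert _ _⟩ h

lemma projTr_graphθ_sv_self (u : V) :
    projTr (sumθ (graphθ G) θ') u (Sum.inl (GS.sv u)) (some ()) (Sum.inl GS.s2) :=
  ⟨{u}, ⟨rfl, u, rfl⟩, rfl⟩

lemma not_projTr_graphθ_sv {u v : V} (huv : u ≠ v) (α : Option Unit) (y : GS V ⊕ S') :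
    ¬ projTr (sumθ (graphθ G) θ') u (Sum.inl (GS.sv v)) α y := by
  rintro ⟨ψ, ⟨rfl, -⟩, hu⟩
  rcases y with (_ | _ | _) | _ <;> rcases α with _ | _ <;>
    simp_all [sumθ, graphθ]

lemma not_rel_sv_of_adj {i' : S'} {R : (GS V ⊕ S') → FExp V → (GS V ⊕ S') → Prop}
    (hBFB : IsBFB (sumθ (graphθ G) θ') R) (hCoh : Coherent (graphθ G) GS.s1 θ' i' R)
    {u v : V} (hadj : G.Adj u v) {r : S'} {φ φ' : FExp V}
    (hRu : R (Sum.inl (GS.sv u)) φ (Sum.inr r)) (hRv : R (Sum.inl (GS.sv v)) φ' (Sum.inr r)) :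
    False := by
  have huφ : u ∈ φ := hCoh.1 _ _ _ hRu (mem_reach_graphθ_sv (Or.inl rfl))
  have huφ' : u ∈ φ' := hCoh.1 _ _ _ hRv (mem_reach_graphθ_sv (Or.inr hadj))
  exact (hBFB.isBB_projTr u).not_rel_deadlock_of_trans
    (not_projTr_graphθ_sv (G.ne_of_adj hadj)) (projTr_graphθ_sv_self u)
    ⟨φ, hRu, huφ⟩ ⟨φ', hRv, huφ'⟩

end GraphFTS

theorem stmt8_general {V : Type} (G : SimpleGraph V)
    {S' : Type} (θ' : TCF S' Unit V) (i' : S')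
    (R : (GS V ⊕ S') → FExp V → (GS V ⊕ S') → Prop)
    (hBFB : IsBFB (sumθ (graphθ G) θ') R)
    (hCoh : Coherent (graphθ G) GS.s1 θ' i' R) :
    (∀ u v : V, G.Adj u v →
      ¬ ∃ (r : S') (φ φ' : FExp V),
          R (Sum.inl (GS.sv u)) φ (Sum.inr r) ∧
          R (Sum.inl (GS.sv v)) φ' (Sum.inr r)) ∧
    (∀ rv : V → S',
      (∀ v : V, ∃ φ : FExp V, R (Sum.inl (GS.sv v)) φ (Sum.inr (rv v))) →
      ∀ u v : V, G.Adj u v → rv u ≠ rv v) := by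
  refine ⟨fun u v hadj ⟨r, φ, φ', hRu, hRv⟩ => not_rel_sv_of_adj hBFB hCoh hadj hRu hRv,
    fun rv hrv u v hadj heq => ?_⟩
  obtain ⟨φu, hφu⟩ := hrv u
  obtain ⟨φv, hφv⟩ := hrv v
  exact not_rel_sv_of_adj hBFB hCoh hadj hφu (heq ▸ hφv)

/-- If `R` is a coherent branching feature bisimulation relation
witnessing `𝒮_G ≃_cbf 𝒮'`, then adjacent vertices `u`, `v` cannot have `s_u`
and `s_v` related to a common state `r` of `𝒮'`; consequently any choice
`v ↦ r_v` of related states yields a proper coloring of `𝒢` by states of `𝒮'`. -/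
theorem stmt8 {V : Type} [Fintype V] [Nonempty V] (G : SimpleGraph V)
    {S' : Type} (θ' : TCF S' Unit V) (i' : S')
    (R : (GS V ⊕ S') → FExp V → (GS V ⊕ S') → Prop)
    (hBFB : IsBFB (sumθ (graphθ G) θ') R)
    (hCoh : Coherent (graphθ G) GS.s1 θ' i' R)
    (hInit : R (Sum.inl GS.s1) Set.univ (Sum.inr i')) :
    (∀ u v : V, G.Adj u v →
      ¬ ∃ (r : S') (φ φ' : FExp V),
          R (Sum.inl (GS.sv u)) φ (Sum.inr r) ∧
          R (Sum.inl (GS.sv v)) φ' (Sum.inr r)) ∧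
    (∀ rv : V → S',
      (∀ v : V, ∃ φ : FExp V, R (Sum.inl (GS.sv v)) φ (Sum.inr (rv v))) →
      ∀ u v : V, G.Adj u v → rv u ≠ rv v) :=
  stmt8_general G θ' i' R hBFB hCoh
end

section
/- Let 𝒮 = (S, θ, s°) be a finite preprocessed FTS, ℬ a semi-partition of S, and B' ∈ ℬ a splitter of B₀ ∈ ℬ with respect to featured label (α,ψ). Let ℬ'' be the collection obtained from ℬ by removing B₀ and adding non-neg_{(α,ψ)}(B₀,B') unless it is contained in some block of ℬ ∖ {B₀}, and adding B₀ ∖ pos_{(α,ψ)}(B₀,B') unless it is contained in some block of ℬ ∖ {B₀}. Then ℬ'' is again a semi-partition of S, ℬ'' refines ℬ, and ℬ'' ≠ ℬ. -/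
open Classical

/-- A semi-partition: nonempty blocks covering the state space, with no block
contained in another one. -/
def IsSemiPartition {S : Type} (Bl : Set (Set S)) : Prop :=
  (∀ B ∈ Bl, B.Nonempty) ∧ ⋃₀ Bl = Set.univ ∧
  ∀ B ∈ Bl, ∀ B' ∈ Bl, B ≠ B' → (B \ B').Nonempty

/-- `C` refines `Bl`: every block of `C` is a subset of a block of `Bl`. -/
def RefinesSP {S : Type} (C Bl : Set (Set S)) : Prop :=
  ∀ c ∈ C, ∃ B ∈ Bl, c ⊆ B

/-- The FTS is preprocessed: the reachability constraint of every state is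
satisfiable, and every product satisfying a transition constraint satisfies the
reachability constraint of the source state. -/
def Preprocessed {S A P : Type} (θ : TCF S A P) (s₀ : S) : Prop :=
  (∀ s : S, (Reach θ s₀ s).Nonempty) ∧
  ∀ (s : S) (α : Act A) (s' : S), θ s α s' ⊆ Reach θ s₀ s

/-- `(α, ψ)` is a featured label. -/
def FeaturedLabel {S A P : Type} (θ : TCF S A P) (α : Act A) (ψ : FExp P) : Prop :=
  ∃ s t : S, θ s α t = ψ ∧ ψ.Nonempty

/-- A sequence of τ-transitions staying within the block `B`, all of whose
constraints are satisfied by the product `p`. -/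
inductive TauChain {S A P : Type} (θ : TCF S A P) (p : P) (B : Set S) : S → S → Prop
  | refl (s : S) : TauChain θ p B s s
  | step {s s' s'' : S} {ψ : FExp P} :
      FTrans θ s none ψ s' → p ∈ ψ → s' ∈ B →
      TauChain θ p B s' s'' → TauChain θ p B s s''

/-- `non-neg_{(α,ψ)}(B,B')`. -/
def nonNeg {S A P : Type} (θ : TCF S A P) (s₀ : S) (α : Act A) (ψ : FExp P)
    (B B' : Set S) : Set S :=
  {s | s ∈ B ∧ ∀ p : P, p ∈ Reach θ s₀ s → p ∈ ψ →
    ∃ sn ∈ B, TauChain θ p B s sn ∧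
      ∃ s' ∈ B', ∃ ψ' : FExp P, FTransOpt θ sn α ψ' s' ∧ p ∈ ψ'}

/-- `pos_{(α,ψ)}(B,B')`: those `s ∈ non-neg` such that every product satisfying
`ψ` satisfies `ρ(s)` and the final step can be taken as an actual transition. -/
def posF {S A P : Type} (θ : TCF S A P) (s₀ : S) (α : Act A) (ψ : FExp P)
    (B B' : Set S) : Set S :=
  {s | s ∈ nonNeg θ s₀ α ψ B B' ∧ ψ ⊆ Reach θ s₀ s ∧
    ∀ p : P, p ∈ Reach θ s₀ s → p ∈ ψ →
      ∃ sn ∈ B, TauChain θ p B s sn ∧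
        ∃ s' ∈ B', ∃ ψ' : FExp P, FTrans θ sn α ψ' s' ∧ p ∈ ψ'}

/-- `neg_{(α,ψ)}(B,B')`. -/
def negF {S A P : Type} (θ : TCF S A P) (s₀ : S) (α : Act A) (ψ : FExp P)
    (B B' : Set S) : Set S :=
  B \ nonNeg θ s₀ α ψ B B'

/-- `B'` is a splitter of `B` with respect to the featured label `(α,ψ)`. -/
def IsSplitterF {S A P : Type} (θ : TCF S A P) (s₀ : S) (α : Act A) (ψ : FExp P)
    (B B' : Set S) : Prop :=
  FeaturedLabel θ α ψ ∧ (B ≠ B' ∨ α ≠ none) ∧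
  (posF θ s₀ α ψ B B').Nonempty ∧ (negF θ s₀ α ψ B B').Nonempty

/-- A stable semi-partition: no block is a splitter of any block with respect
to any featured label. -/
def StableSP {S A P : Type} (θ : TCF S A P) (s₀ : S) (Bl : Set (Set S)) : Prop :=
  IsSemiPartition Bl ∧
  ∀ B ∈ Bl, ∀ B' ∈ Bl, ∀ (α : Act A) (ψ : FExp P), ¬ IsSplitterF θ s₀ α ψ B B'

/-- The collection obtained from `Bl` by removing `B₀` and adding `N` (the
non-neg set) and `B₀ ∖ Pz` (the complement of the pos set), each unless it is
contained in some block of `Bl ∖ {B₀}`. -/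
def splitResult {S : Type} (Bl : Set (Set S)) (B₀ N Pz : Set S) : Set (Set S) :=
  (Bl \ {B₀}) ∪
  {X | (X = N ∨ X = B₀ \ Pz) ∧ ¬ ∃ B'' ∈ Bl \ {B₀}, X ⊆ B''}

/-- If `B' ∈ ℬ` is a splitter of `B₀ ∈ ℬ` with respect to a
featured label `(α,ψ)`, then the collection `ℬ''` obtained by splitting `B₀`
is again a semi-partition, it refines `ℬ`, and `ℬ'' ≠ ℬ`. -/
theorem stmt12 {S A P : Type} [Finite S] [Finite A] [Finite P]
    (θ : TCF S A P) (s₀ : S) (hpre : Preprocessed θ s₀)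
    (Bl : Set (Set S)) (hBl : IsSemiPartition Bl)
    (B₀ B' : Set S) (hB₀ : B₀ ∈ Bl) (hB' : B' ∈ Bl)
    (α : Act A) (ψ : FExp P) (hsplit : IsSplitterF θ s₀ α ψ B₀ B') :
    IsSemiPartition
      (splitResult Bl B₀ (nonNeg θ s₀ α ψ B₀ B') (posF θ s₀ α ψ B₀ B')) ∧
    RefinesSP
      (splitResult Bl B₀ (nonNeg θ s₀ α ψ B₀ B') (posF θ s₀ α ψ B₀ B')) Bl ∧
    splitResult Bl B₀ (nonNeg θ s₀ α ψ B₀ B') (posF θ s₀ α ψ B₀ B') ≠ Bl := by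
  classical
  set N := nonNeg θ s₀ α ψ B₀ B' with hN
  set Pz := posF θ s₀ α ψ B₀ B' with hPz
  obtain ⟨hne, hcov, hnc⟩ := hBl
  obtain ⟨_, _, hposne, hnegne⟩ := hsplit
  have hNB : N ⊆ B₀ := fun s hs => hs.1
  have hPN : Pz ⊆ N := fun s hs => hs.1
  have hPB : Pz ⊆ B₀ := fun s hs => hNB (hPN hs)
  have hBN : (B₀ \ N).Nonempty := hnegne
  have hNne : N.Nonempty := hposne.mono hPN
  have hBPne : (B₀ \ Pz).Nonempty :=
    hBN.mono (fun x hx => ⟨hx.1, fun h => hx.2 (hPN h)⟩)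
  constructor
  · refine ⟨?_, ?_, ?_⟩
    · rintro B (⟨hB, -⟩ | ⟨hB, -⟩)
      · exact hne B hB
      · rcases hB with rfl | rfl
        · exact hNne
        · exact hBPne
    · apply Set.eq_univ_of_forall
      intro x
      have hx : x ∈ ⋃₀ Bl := hcov ▸ Set.mem_univ x
      obtain ⟨B, hB, hxB⟩ := hx
      by_cases hB0 : B = B₀
      · rw [hB0] at hxB
        -- x ∈ B₀ = N ∪ (B₀ \ Pz)
        have hx2 : x ∈ N ∨ x ∈ B₀ \ Pz := by
          by_cases hxN : x ∈ N
          · exact Or.inl hxN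
          · exact Or.inr ⟨hxB, fun h => hxN (hPN h)⟩
        rcases hx2 with hxN | hxBP
        · by_cases hc : ∃ B'' ∈ Bl \ {B₀}, N ⊆ B''
          · obtain ⟨B'', hB'', hsub⟩ := hc
            exact ⟨B'', Or.inl hB'', hsub hxN⟩
          · exact ⟨N, Or.inr ⟨Or.inl rfl, hc⟩, hxN⟩
        · by_cases hc : ∃ B'' ∈ Bl \ {B₀}, B₀ \ Pz ⊆ B''
          · obtain ⟨B'', hB'', hsub⟩ := hc
            exact ⟨B'', Or.inl hB'', hsub hxBP⟩
          · exact ⟨B₀ \ Pz, Or.inr ⟨Or.inr rfl, hc⟩, hxBP⟩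
      · exact ⟨B, Or.inl ⟨hB, hB0⟩, hxB⟩
    · rintro B hB C hC hBC
      rcases hB with ⟨hB, hBne⟩ | ⟨hBeq, hBnotsub⟩
      · rcases hC with ⟨hC, -⟩ | ⟨hCeq, -⟩
        · exact hnc B hB C hC hBC
        · -- C ⊆ B₀, B ≠ B₀, so B \ B₀ ⊆ B \ C
          have hCB0 : C ⊆ B₀ := by
            rcases hCeq with rfl | rfl
            · exact hNB
            · exact Set.diff_subset
          have := hnc B hB B₀ hB₀ hBne
          exact this.mono (fun x hx => ⟨hx.1, fun h => hx.2 (hCB0 h)⟩)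
      · rcases hC with ⟨hC, hCne⟩ | ⟨hCeq, -⟩
        · -- B is new, not contained in C ∈ Bl \ {B₀}
          have hns : ¬ B ⊆ C := fun h => hBnotsub ⟨C, ⟨hC, hCne⟩, h⟩
          obtain ⟨x, hx, hxc⟩ := Set.not_subset.mp hns
          exact ⟨x, hx, hxc⟩
        · rcases hBeq with rfl | rfl <;> rcases hCeq with rfl | rfl
          · exact absurd rfl hBC
          · exact hposne.mono (fun x hx => ⟨hPN hx, fun h => h.2 hx⟩)
          · exact hBN.mono (fun x hx => ⟨⟨hx.1, fun h => hx.2 (hPN h)⟩, hx.2⟩)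
          · exact absurd rfl hBC
  refine ⟨?_, ?_⟩
  · rintro c (⟨hc, -⟩ | ⟨hceq, -⟩)
    · exact ⟨c, hc, subset_rfl⟩
    · rcases hceq with rfl | rfl
      · exact ⟨B₀, hB₀, hNB⟩
      · exact ⟨B₀, hB₀, Set.diff_subset⟩
  · intro heq
    have hB0mem : B₀ ∈ splitResult Bl B₀ N Pz := by rw [heq]; exact hB₀
    rcases hB0mem with ⟨-, hne'⟩ | ⟨heq', -⟩
    · exact hne' rfl
    · rcases heq' with h | h
      · obtain ⟨x, hx⟩ := hBN
        exact hx.2 (h ▸ hx.1)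
      · obtain ⟨x, hx⟩ := hposne
        exact (h ▸ hPB hx : x ∈ B₀ \ Pz).2 hx
end
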